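/- Let g ≥ 2 be an integer, let m ≥ 2, λ ≥ m − 1 ≥ 1, α real with 0 < α ≤ g − m, and set a = (gλ + α)/(1 + λ), b = (gλ + α)/λ. If g^g < a^{g−1}·b, then (m − 1)² < 1 − m/g. -/

import Mathlib

/-! By AM–GM, `a ^ (g - 1) * b ≤ s ^ g` with `s = ((g - 1) a + b) / g`, so the hypothesis forces
`g < s`. Clearing denominators, `g ^ 2 < (g - 1) a + b` says exactly `0 < (α + 1 - g) g λ + α`,
and the bounds `α ≤ g - m`, `λ ≥ m - 1` turn this into `0 < g - m - (m - 1) ^ 2 g`. -/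

theorem pow_pred_mul_le_arith_mean_pow {n : ℕ} (hn : 0 < n) {a b : ℝ} (ha : 0 < a)
    (hb : 0 ≤ b) :
    a ^ (n - 1) * b ≤ (((n - 1) * a + b) / n) ^ n := by
  obtain ⟨k, rfl⟩ := Nat.exists_eq_add_one_of_ne_zero hn.ne'
  set t := (((k + 1 : ℕ) - 1) * a + b) / (k + 1 : ℕ) / a
  -- Bernoulli's inequality at `t - 1`, scaled by `a ^ (k + 1)`.
  have bernoulli : 1 + (k + 1 : ℕ) * (t - 1) ≤ t ^ (k + 1) := by
    have ht : 0 ≤ t := by simp only [t, Nat.cast_add_one, add_sub_cancel_right]; positivity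
    simpa using one_add_mul_le_pow (by linarith : (-2 : ℝ) ≤ t - 1) (k + 1)
  calc a ^ (k + 1 - 1) * b = a ^ (k + 1) * (1 + (k + 1 : ℕ) * (t - 1)) := by
        simp only [t]; field_simp; push_cast; ring
    _ ≤ a ^ (k + 1) * t ^ (k + 1) := by gcongr
    _ = _ := by rw [← mul_pow, mul_div_cancel₀ _ ha.ne']

theorem arith_mean_sub_sq_eq {g lam α : ℝ} (hlam : 0 < lam) :
    (g - 1) * ((g * lam + α) / (1 + lam)) + (g * lam + α) / lam - g ^ 2 =
      ((α + 1 - g) * g * lam + α) / (lam * (1 + lam)) := by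
  have : 1 + lam ≠ 0 := by linarith
  field_simp
  ring

theorem sq_lt_one_sub_div_of_pos {g m lam α : ℝ} (hg : 0 < g) (hm : 1 ≤ m)
    (hlam : m - 1 ≤ lam) (hαm : α ≤ g - m) (h : 0 < (α + 1 - g) * g * lam + α) :
    (m - 1) ^ 2 < 1 - m / g := by
  have hgm : (α + 1 - g) * g * lam ≤ -((m - 1) ^ 2 * g) := by
    nlinarith [mul_le_mul_of_nonneg_left hlam (by positivity : 0 ≤ (m - 1) * g),
      mul_le_mul_of_nonneg_right (by linarith : α + 1 - g ≤ 1 - m)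
        (by nlinarith : 0 ≤ g * lam)]
  rw [one_sub_div hg.ne', lt_div_iff₀ hg]
  linarith

theorem stmt_19_general (g m : ℕ) (hg : 2 ≤ g)
    (lam α : ℝ) (hlam : (m : ℝ) - 1 ≤ lam) (hm1 : 1 ≤ (m : ℝ) - 1)
    (hα : 0 < α) (hαm : α ≤ (g : ℝ) - m)
    (a b : ℝ) (ha : a = ((g : ℝ) * lam + α) / (1 + lam))
    (hb : b = ((g : ℝ) * lam + α) / lam)
    (h : (g : ℝ) ^ g < a ^ (g - 1) * b) :
    ((m : ℝ) - 1) ^ 2 < 1 - (m : ℝ) / g := by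
  have hg1 : (1 : ℝ) ≤ g := by exact_mod_cast (by omega : 1 ≤ g)
  have hg0 : (0 : ℝ) < g := by linarith
  have hlam0 : 0 < lam := by linarith
  have ha0 : 0 < a := by rw [ha]; positivity
  have hb0 : 0 ≤ b := by rw [hb]; positivity
  have hmean : (g : ℝ) < ((g - 1) * a + b) / g :=
    lt_of_pow_lt_pow_left₀ g
      (div_nonneg (add_nonneg (mul_nonneg (by linarith) ha0.le) hb0) hg0.le)
      (h.trans_le (pow_pred_mul_le_arith_mean_pow (by omega) ha0 hb0))
  have hsq : 0 < (g - 1) * a + b - (g : ℝ) ^ 2 := by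
    rw [lt_div_iff₀ hg0] at hmean
    nlinarith
  rw [ha, hb, arith_mean_sub_sq_eq hlam0] at hsq
  exact sq_lt_one_sub_div_of_pos hg0 (by linarith) hlam hαm
    (pos_of_mul_pos_left hsq (by positivity))

/-- Combination of two steps in the proof of Lemma 7.2. -/
theorem stmt_19 (g m : ℕ) (hg : 2 ≤ g) (hm : 2 ≤ m)
    (lam α : ℝ) (hlam : (m : ℝ) - 1 ≤ lam) (hm1 : 1 ≤ (m : ℝ) - 1)
    (hα : 0 < α) (hαm : α ≤ (g : ℝ) - m)
    (a b : ℝ) (ha : a = ((g : ℝ) * lam + α) / (1 + lam))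
    (hb : b = ((g : ℝ) * lam + α) / lam)
    (h : (g : ℝ) ^ g < a ^ (g - 1) * b) :
    ((m : ℝ) - 1) ^ 2 < 1 - (m : ℝ) / g :=
  stmt_19_general g m hg lam α hlam hm1 hα hαm a b ha hb h
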